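/- arXiv:2504.08920 — 3 statements merged into one kernel-verified Lean document; each statement's English description precedes it below -/
import Mathlib

section
/- Let Q be a quaternion algebra over a field k of characteristic not 2, with canonical involution γ, and let z₀ be a nonzero pure quaternion with z₀² = 0. Define b_{z₀} : Qz₀ × Qz₀ → k by the condition b_{z₀}(x,y)·z₀ = γ(x)·y for x, y ∈ Qz₀ (equivalently b_{z₀}(z z₀, z' z₀) = −z₀ γ(z) z' regarded as a scalar). Then b_{z₀} is a well-defined alternating (anti-symmetric) k-bilinear form on the 2-dimensional space Qz₀. -/
/-!
For `x = u z₀` and `y = v z₀` one has `γ(x) y = -z₀ (γ(u) v) z₀`. Since `z₀` is pure,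
`z₀ w - γ(w) z₀ = Trd(z₀ w)` is a scalar, and with `z₀² = 0` this gives `z₀ w z₀ = Trd(z₀ w) z₀`.
For `x = y` the middle factor `γ(u) u` is itself a scalar, so `γ(x) x = -γ(u) u z₀² = 0`:
the form is alternating, hence anti-symmetric.
-/

open Quaternion

namespace QuaternionAlgebra

variable {R : Type*} [CommRing R] {c₁ c₃ : R} {z : ℍ[R, c₁, 0, c₃]}

theorem star_eq_neg_of_re_eq_zero (hz : z.re = 0) : star z = -z := by
  ext <;> simp [hz]

theorem mul_mul_eq_smul_of_mul_self_eq_zero (hz : z.re = 0) (hzz : z * z = 0)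
    (w : ℍ[R, c₁, 0, c₃]) : z * w * z = (2 * (z * w).re) • z := by
  have htrace := self_add_star' (z * w)
  rw [zero_mul, add_zero, star_mul, star_eq_neg_of_re_eq_zero hz, mul_neg, ← sub_eq_add_neg,
    sub_eq_iff_eq_add] at htrace
  calc z * w * z = (↑(2 * (z * w).re) + star w * z) * z := congrArg (· * z) htrace
    _ = (2 * (z * w).re) • z := by
      rw [add_mul, mul_assoc, hzz, mul_zero, add_zero, coe_mul_eq_smul]

theorem star_mul_mem_span_singleton (hz : z.re = 0) (hzz : z * z = 0)
    {x y : ℍ[R, c₁, 0, c₃]} (hx : x ∈ LinearMap.range (LinearMap.mulRight R z))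
    (hy : y ∈ LinearMap.range (LinearMap.mulRight R z)) : star x * y ∈ R ∙ z := by
  obtain ⟨u, rfl⟩ := hx
  obtain ⟨v, rfl⟩ := hy
  have : star (u * z) * (v * z) = -(z * (star u * v) * z) := by
    rw [star_mul, star_eq_neg_of_re_eq_zero hz]; noncomm_ring
  rw [LinearMap.mulRight_apply, LinearMap.mulRight_apply, this,
    mul_mul_eq_smul_of_mul_self_eq_zero hz hzz]
  exact neg_mem (Submodule.smul_mem _ _ (Submodule.mem_span_singleton_self z))

theorem star_mul_self_eq_zero (hz : z.re = 0) (hzz : z * z = 0)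
    {x : ℍ[R, c₁, 0, c₃]} (hx : x ∈ LinearMap.range (LinearMap.mulRight R z)) :
    star x * x = 0 := by
  obtain ⟨u, rfl⟩ := hx
  calc star (u * z) * (u * z) = -(z * (star u * u) * z) := by
        rw [star_mul, star_eq_neg_of_re_eq_zero hz]; noncomm_ring
    _ = 0 := by rw [star_mul_eq_coe, mul_coe_eq_smul, smul_mul_assoc, hzz, smul_zero, neg_zero]

end QuaternionAlgebra

theorem Module.exists_dual_smul_eq_of_mem_span_singleton {K V : Type*} [Field K]
    [AddCommGroup V] [Module K V] (z : V) :
    ∃ ℓ : Module.Dual K V, ∀ v ∈ K ∙ z, ℓ v • z = v := by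
  obtain rfl | hz := eq_or_ne z 0
  · exact ⟨0, fun v hv => by simp_all⟩
  obtain ⟨ℓ, hℓ⟩ := Module.Projective.exists_dual_eq_one K hz
  refine ⟨ℓ, fun v hv => ?_⟩
  obtain ⟨c, rfl⟩ := Submodule.mem_span_singleton.mp hv
  rw [map_smul, hℓ, smul_eq_mul, mul_one]

theorem stmt2_general (k : Type) [Field k] (a b : k)
    (z₀ : ℍ[k, a, b]) (hpure : z₀.re = 0) (hsq : z₀ ^ 2 = 0) :
    ∃ B : ↥(LinearMap.range (LinearMap.mulRight k z₀)) →ₗ[k]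
          ↥(LinearMap.range (LinearMap.mulRight k z₀)) →ₗ[k] k,
      (∀ x y : ↥(LinearMap.range (LinearMap.mulRight k z₀)),
          B x y • z₀ = star (x : ℍ[k, a, b]) * (y : ℍ[k, a, b])) ∧
      (∀ x, B x x = 0) ∧
      (∀ x y, B x y = - B y x) := by
  have hzz : z₀ * z₀ = 0 := by rwa [← sq]
  obtain ⟨ℓ, hℓ⟩ := Module.exists_dual_smul_eq_of_mem_span_singleton (K := k) z₀
  let B : ↥(LinearMap.range (LinearMap.mulRight k z₀)) →ₗ[k]
      ↥(LinearMap.range (LinearMap.mulRight k z₀)) →ₗ[k] k :=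
    LinearMap.mk₂ k (fun x y => ℓ (star (x : ℍ[k, a, b]) * y))
      (fun x x' y => by simp [add_mul])
      (fun c x y => by simp)
      (fun x y y' => by simp [mul_add])
      (fun c x y => by simp)
  have hB : B.IsAlt := fun x => by
    simp [B, QuaternionAlgebra.star_mul_self_eq_zero hpure hzz x.2]
  refine ⟨B, fun x y => hℓ _ (QuaternionAlgebra.star_mul_mem_span_singleton hpure hzz x.2 y.2),
    hB, fun x y => (hB.neg y x).symm⟩

/-- Let `Q = ℍ[k,a,b]` be a quaternion algebra over `k`, `char k ≠ 2`,
with canonical involution `γ = star`, and `z₀ ≠ 0` a pure quaternion with `z₀² = 0`.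
There is a (well-defined) `k`-bilinear form `B` on the 2-dimensional space `Qz₀`
characterized by `B x y • z₀ = γ(x)·y`, and it is alternating (anti-symmetric). -/
theorem stmt2 (k : Type) [Field k] (h2 : (2 : k) ≠ 0) (a b : k) (ha : a ≠ 0) (hb : b ≠ 0)
    (z₀ : ℍ[k, a, b]) (hne : z₀ ≠ 0) (hpure : z₀.re = 0) (hsq : z₀ ^ 2 = 0) :
    ∃ B : ↥(LinearMap.range (LinearMap.mulRight k z₀)) →ₗ[k]
          ↥(LinearMap.range (LinearMap.mulRight k z₀)) →ₗ[k] k,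
      (∀ x y : ↥(LinearMap.range (LinearMap.mulRight k z₀)),
          B x y • z₀ = star (x : ℍ[k, a, b]) * (y : ℍ[k, a, b])) ∧
      (∀ x, B x x = 0) ∧
      (∀ x y, B x y = - B y x) :=
  stmt2_general k a b z₀ hpure hsq
end

section
/- Let Q be a quaternion algebra over a field k of characteristic not 2, γ its canonical involution, z₀ a nonzero pure quaternion with z₀² = 0, and z an invertible pure quaternion. Define the symmetric bilinear form b_{z₀,z} on Qz₀ by b_{z₀,z}(z₁z₀, z₂z₀) = −Trd_Q(z₀ γ(z₁) z z₂). If z and z₀ anti-commute (i.e., z z₀ = −z₀ z), then b_{z₀,z} is isotropic, hence a hyperbolic plane. -/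
/-!
Since `γ(z) z = N(z)` is a nonzero scalar, `b(z z₀, w z₀) = -2 N(z) Re(z₀ w)`. For `w = z` this
vanishes because `Re(z z₀) = Re(z₀ z)` while `z z₀ = -z₀ z`, and for a suitable `w` it is nonzero
because the trace form `(x, y) ↦ Re(x y)` is nondegenerate. A symmetric form with an isotropic
vector `u` and `B(u, w₀) = 1` has the hyperbolic pair `(u, w₀ - B(w₀, w₀)/2 • u)`. Finally `Qz₀`
has dimension at most `2`, since `z₀² = 0` puts it inside the kernel of right multiplication by
`z₀`, and `z z₀`, `w z₀` are independent because `Re` vanishes on the first but not the second.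
-/

open Quaternion

section

variable {K V : Type*} [Field K] [AddCommGroup V] [Module K V]

theorem LinearMap.BilinForm.IsSymm.exists_isotropic_apply_eq_one {B : LinearMap.BilinForm K V}
    (hB : B.IsSymm) (h2 : (2 : K) ≠ 0) {u w₀ : V} (hu : B u u = 0) (huw₀ : B u w₀ = 1) :
    ∃ w, B w w = 0 ∧ B u w = 1 := by
  refine ⟨w₀ - (B w₀ w₀ / 2) • u, ?_, by simp [hu, huw₀]⟩
  simp only [map_sub, map_smul, LinearMap.sub_apply, LinearMap.smul_apply, smul_eq_mul, hu, huw₀,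
    hB.eq w₀ u, mul_one, mul_zero, sub_zero]
  field_simp
  ring

theorem linearIndependent_pair_of_apply_eq_zero (f : V →ₗ[K] K) {x y : V} (hx : x ≠ 0)
    (hfx : f x = 0) (hfy : f y ≠ 0) : LinearIndependent K ![x, y] :=
  (LinearIndependent.pair_iff' hx).2 fun c hc => hfy (by rw [← hc, map_smul, hfx, smul_zero])

theorem LinearMap.two_mul_finrank_range_le_of_comp_self_eq_zero [FiniteDimensional K V]
    {f : V →ₗ[K] V} (hf : f ∘ₗ f = 0) :
    2 * Module.finrank K (range f) ≤ Module.finrank K V := by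
  have hrange := Submodule.finrank_mono (LinearMap.range_le_ker_iff.2 hf)
  have := f.finrank_range_add_finrank_ker
  omega

theorem Submodule.span_pair_eq_of_finrank_le_two {S : Submodule K V} [FiniteDimensional K S]
    {x y : V} (hxy : LinearIndependent K ![x, y]) (hx : x ∈ S) (hy : y ∈ S)
    (hS : Module.finrank K S ≤ 2) : span K {x, y} = S := by
  refine eq_of_le_of_finrank_le
    (span_le.2 (Set.insert_subset hx (Set.singleton_subset_iff.2 hy))) ?_
  have := finrank_span_eq_card hxy
  rw [Matrix.range_cons_cons_empty] at this
  simpa [this] using hS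

end

namespace QuaternionAlgebra

variable {R : Type*} [CommRing R] {a b : R}

theorem re_mul_comm (p q : ℍ[R,a,b]) : (p * q).re = (q * p).re := by
  simp [re_mul]; ring

theorem re_mul_eq_zero_of_mul_eq_neg [NoZeroDivisors R] (h2 : (2 : R) ≠ 0) {p q : ℍ[R,a,b]}
    (h : p * q = -(q * p)) : (q * p).re = 0 := by
  have hcomm := re_mul_comm p q
  rw [h, re_neg] at hcomm
  exact (mul_eq_zero.1 (by linear_combination -hcomm : 2 * (q * p).re = 0)).resolve_left h2

theorem re_star_mul_self_ne_zero [Nontrivial R] {z : ℍ[R,a,b]} (hz : IsUnit z) :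
    (star z * z).re ≠ 0 := by
  intro h
  have : star z * z = 0 := by rw [star_mul_eq_coe, h, coe_zero]
  exact not_isUnit_zero (star_eq_zero.1 (hz.mul_left_eq_zero.1 this) ▸ hz)

theorem exists_re_mul_ne_zero [NoZeroDivisors R] (ha : a ≠ 0) (hb : b ≠ 0) {x : ℍ[R,a,b]}
    (hx : x ≠ 0) : ∃ y, (x * y).re ≠ 0 := by
  by_contra! h
  have h1 : x.re = 0 := by simpa using h 1
  have hi : x.imI = 0 := by simpa [re_mul, ha] using h ⟨0, 1, 0, 0⟩
  have hj : x.imJ = 0 := by simpa [re_mul, hb] using h ⟨0, 0, 1, 0⟩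
  have hk : x.imK = 0 := by simpa [re_mul, ha, hb] using h ⟨0, 0, 0, 1⟩
  exact hx (by ext <;> simp [h1, hi, hj, hk])

theorem finrank_range_mulRight_le_two {K : Type*} [Field K] {a b : K} {x : ℍ[K,a,b]}
    (hx : x ^ 2 = 0) : Module.finrank K (LinearMap.range (LinearMap.mulRight K x)) ≤ 2 := by
  have := LinearMap.two_mul_finrank_range_le_of_comp_self_eq_zero (f := LinearMap.mulRight K x)
    (by rw [← LinearMap.mulRight_mul, ← sq, hx, LinearMap.mulRight_zero_eq_zero])
  rw [finrank_eq_four] at this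
  omega

variable (z₀ z : ℍ[R,a,b])

/-- The form `b_{z₀,z}` pulled back along `u ↦ u * z₀`; here `Trd q = 2 * q.re` as `c₂ = 0`. -/
def twistedTrdForm : LinearMap.BilinForm R ℍ[R,a,b] :=
  LinearMap.mk₂ R (fun u w => -(2 * (z₀ * star u * z * w).re))
    (fun u₁ u₂ w => by simp only [star_add, mul_add, add_mul, re_add]; ring)
    (fun c u w => by
      simp only [star_smul, mul_smul_comm, smul_mul_assoc, re_smul, smul_eq_mul]; ring)
    (fun u w₁ w₂ => by simp only [mul_add, re_add]; ring)
    (fun c u w => by simp only [mul_smul_comm, re_smul, smul_eq_mul]; ring)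

theorem twistedTrdForm_apply (u w : ℍ[R,a,b]) :
    twistedTrdForm z₀ z u w = -(2 * (z₀ * star u * z * w).re) := rfl

variable {z₀ z}

theorem twistedTrdForm_isSymm (hz₀ : z₀.re = 0) (hz : z.re = 0) :
    (twistedTrdForm z₀ z).IsSymm := by
  refine ⟨fun u w => ?_⟩
  have hz₀' : star z₀ = -z₀ := by ext <;> simp [hz₀]
  have hz' : star z = -z := by ext <;> simp [hz]
  rw [twistedTrdForm_apply, twistedTrdForm_apply]
  congr 2
  calc (z₀ * star u * z * w).re = (star (z₀ * star u * z * w)).re := by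
        rw [re_star, zero_mul, add_zero]
    _ = (star w * z * u * z₀).re := by
      simp only [star_mul, star_star, hz₀', hz', mul_neg, neg_mul, neg_neg, mul_assoc]
    _ = (z₀ * (star w * z * u)).re := re_mul_comm _ _
    _ = (z₀ * star w * z * u).re := by simp only [mul_assoc]

theorem twistedTrdForm_self_apply (w : ℍ[R,a,b]) :
    twistedTrdForm z₀ z z w = -(2 * ((star z * z).re * (z₀ * w).re)) := by
  rw [twistedTrdForm_apply, mul_assoc z₀, star_mul_eq_coe, mul_coe_eq_smul, smul_mul_assoc,
    re_smul, smul_eq_mul, re_coe]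

end QuaternionAlgebra

open QuaternionAlgebra

/-- `Q = ℍ[k,a,b]`, `char k ≠ 2`, `z₀ ≠ 0` pure with `z₀² = 0`, `z`
an invertible pure quaternion anti-commuting with `z₀`. The symmetric bilinear form
`b(z₁z₀, z₂z₀) = −Trd(z₀ γ(z₁) z z₂)` (with `Trd q = 2*q.re`, `γ = star`) on `Qz₀`
is isotropic (the vector `z·z₀ ≠ 0` is isotropic), hence a hyperbolic plane: there is
a basis `(u·z₀, w·z₀)` of `Qz₀` with `b(u,u) = b(w,w) = 0` and `b(u,w) = 1`. -/
theorem stmt3 (k : Type) [Field k] (h2 : (2 : k) ≠ 0) (a b : k) (ha : a ≠ 0) (hb : b ≠ 0)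
    (z₀ : ℍ[k, a, b]) (hne : z₀ ≠ 0) (hpure : z₀.re = 0) (hsq : z₀ ^ 2 = 0)
    (z : ℍ[k, a, b]) (hzpure : z.re = 0) (hzinv : IsUnit z)
    (hanti : z * z₀ = -(z₀ * z)) :
    z * z₀ ≠ 0 ∧
    -(2 * (z₀ * star z * z * z).re) = 0 ∧
    ∃ u w : ℍ[k, a, b],
      LinearIndependent k ![u * z₀, w * z₀] ∧
      Submodule.span k {u * z₀, w * z₀} = LinearMap.range (LinearMap.mulRight k z₀) ∧
      -(2 * (z₀ * star u * z * u).re) = 0 ∧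
      -(2 * (z₀ * star w * z * w).re) = 0 ∧
      -(2 * (z₀ * star u * z * w).re) = 1 := by
  set B := twistedTrdForm z₀ z
  have hN := re_star_mul_self_ne_zero hzinv
  have hz₀z := re_mul_eq_zero_of_mul_eq_neg h2 hanti
  have hBzz : B z z = 0 := by rw [twistedTrdForm_self_apply, hz₀z, mul_zero, mul_zero, neg_zero]
  obtain ⟨w₀, hw₀⟩ := exists_re_mul_ne_zero ha hb hne
  have hBzw₀ : B z w₀ ≠ 0 := by
    rw [twistedTrdForm_self_apply]
    exact neg_ne_zero.2 (mul_ne_zero h2 (mul_ne_zero hN hw₀))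
  have hBzw₀' : B z ((B z w₀)⁻¹ • w₀) = 1 := by
    rw [map_smul, smul_eq_mul, inv_mul_cancel₀ hBzw₀]
  obtain ⟨w, hBww, hBzw⟩ :=
    (twistedTrdForm_isSymm hpure hzpure).exists_isotropic_apply_eq_one h2 hBzz hBzw₀'
  have hzz₀ : z * z₀ ≠ 0 := fun h => hne (hzinv.mul_right_eq_zero.1 h)
  have hwz₀ : (w * z₀).re ≠ 0 := by
    intro h
    rw [re_mul_comm] at h
    rw [twistedTrdForm_self_apply, h] at hBzw
    simp at hBzw
  have hli : LinearIndependent k ![z * z₀, w * z₀] :=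
    linearIndependent_pair_of_apply_eq_zero (reₗ a 0 b) hzz₀
      (by rwa [reₗ_apply, re_mul_comm]) hwz₀
  have hspan : Submodule.span k {z * z₀, w * z₀} = LinearMap.range (LinearMap.mulRight k z₀) :=
    Submodule.span_pair_eq_of_finrank_le_two hli ⟨z, rfl⟩ ⟨w, rfl⟩
      (finrank_range_mulRight_le_two hsq)
  exact ⟨hzz₀, hBzz, z, w, hli, hspan, hBzz, hBww, hBzw⟩
end

section
/- Let k be a field, A a commutative-ring-valued functor on field extensions of k, F a set-valued functor, and (α_x)_{x ∈ X} a finite family of invariants in Inv(F, A) that is a strong basis: for every extension K/k, every invariant over K of F with values in A is uniquely an A(K)-linear combination of the (α_x)_K. For x̄ = (x₁,…,x_r) ∈ X^r define α_{x̄} ∈ Inv(F^r, A) by α_{x̄}(f₁,…,f_r) = ∏_{i=1}^r α_{x_i}(f_i). Then (α_{x̄})_{x̄ ∈ X^r} is a strong basis of Inv(F^r, A). -/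
open CategoryTheory

/-- The `r`-fold pointwise power `F^r` of a `Type`-valued functor `F`. -/
def powFunctor {C : Type} [Category C] (F : C ⥤ Type) (r : ℕ) : C ⥤ Type where
  obj X := Fin r → F.obj X
  map f := TypeCat.ofHom fun v i => F.map f (v i)
  map_id X := by ext v; simp
  map_comp f g := by ext v; simp

/-!
Induction on `r`, via `F^(r+1) ≅ F × F^r`. Let `(α_i)` and `(δ_j)` be strong bases for `G` and `H`
and `β` an invariant of `G × H` over `K`. Fixing the first argument at `f ∈ G(L)` (restricted to
each extension of `L`) gives an invariant of `H` over `L`, so `β(f, -) = ∑ⱼ dⱼ(f) δⱼ` with unique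
`dⱼ(f) ∈ A(L)`. By uniqueness, `f ↦ dⱼ(f)` is itself an invariant of `G` over `K`, hence
`dⱼ = ∑ᵢ eᵢⱼ αᵢ` and `β = ∑ eᵢⱼ αᵢ δⱼ`. For uniqueness, any such expansion of `β` induces expansions
of the `dⱼ`; this uses that the `αᵢ` are natural and that `A` takes values in ring homomorphisms.
-/

section

variable {C : Type} [Category C]

def IsInvariantOver (G A : C ⥤ Type) (K : C)
    (β : ∀ L : Under K, G.obj L.right → A.obj L.right) : Prop :=
  ∀ (L L' : Under K) (g : L ⟶ L') (v : G.obj L.right),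
    β L' (G.map g.right v) = A.map g.right (β L v)

def IsLinearCombination (G A : C ⥤ Type) [∀ Y : C, CommRing (A.obj Y)] {K : C}
    {ι : Type} [Fintype ι] (γ : ι → ∀ Y : C, G.obj Y → A.obj Y)
    (β : ∀ L : Under K, G.obj L.right → A.obj L.right) (c : ι → A.obj K) : Prop :=
  ∀ (L : Under K) (v : G.obj L.right),
    β L v = ∑ i : ι, A.map L.hom (c i) * γ i L.right v

def IsStrongBasis (G A : C ⥤ Type) [∀ Y : C, CommRing (A.obj Y)]
    {ι : Type} [Fintype ι] (γ : ι → ∀ Y : C, G.obj Y → A.obj Y) : Prop :=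
  ∀ (K : C) (β : ∀ L : Under K, G.obj L.right → A.obj L.right),
    IsInvariantOver G A K β → ∃! c : ι → A.obj K, IsLinearCombination G A γ β c

section

variable {G H A : C ⥤ Type} [∀ Y : C, CommRing (A.obj Y)]
  {ι κ : Type} [Fintype ι] [Fintype κ]

theorem IsStrongBasis.reindex {γ : ι → ∀ Y : C, G.obj Y → A.obj Y}
    (hγ : IsStrongBasis G A γ) (σ : κ ≃ ι) : IsStrongBasis G A (fun k => γ (σ k)) := by
  intro K β hβ
  refine ((σ.symm.arrowCongr (Equiv.refl (A.obj K))).existsUnique_congr fun c => ?_).mp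
    (hγ K β hβ)
  refine forall₂_congr fun L v => ?_
  rw [← σ.sum_comp]
  rfl

theorem IsStrongBasis.of_iso {γ : ι → ∀ Y : C, H.obj Y → A.obj Y}
    (hγ : IsStrongBasis H A γ) (e : G ≅ H) :
    IsStrongBasis G A (fun i Y v => γ i Y (e.hom.app Y v)) := by
  intro K β hβ
  have hβ' : IsInvariantOver H A K (fun L w => β L (e.inv.app L.right w)) := by
    intro L L' g w
    rw [← hβ, ← NatTrans.naturality_apply]
  refine (existsUnique_congr fun c => ⟨fun h L v => ?_, fun h L w => ?_⟩).mp (hγ K _ hβ')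
  · simpa using h L (e.hom.app L.right v)
  · simpa using h L (e.inv.app L.right w)

theorem isStrongBasis_of_unique [∀ Y : C, Unique (G.obj Y)] [Unique ι] :
    IsStrongBasis G A (fun (_ : ι) _ _ => 1) := by
  intro K β hβ
  refine ⟨fun _ => β (Under.mk (𝟙 K)) default, fun L v => ?_, fun c hc => ?_⟩
  · have h := hβ (Under.mk (𝟙 K)) L (Under.homMk L.hom) default
    rw [Subsingleton.elim (G.map _ default) v] at h
    simpa using h
  · funext i
    simpa [Unique.eq_default i] using (hc (Under.mk (𝟙 K)) default).symm

end

theorem IsLinearCombination.restrict {G A : C ⥤ Type} [∀ Y : C, CommRing (A.obj Y)] {K : C}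
    {ι : Type} [Fintype ι] {γ : ι → ∀ Y : C, G.obj Y → A.obj Y}
    {β : ∀ L : Under K, G.obj L.right → A.obj L.right} {c : ι → A.obj K}
    (h : IsLinearCombination G A γ β c) (L : Under K) :
    IsLinearCombination G A γ (fun M v => β ((Under.map L.hom).obj M) v)
      (fun i => A.map L.hom (c i)) := by
  intro M v
  refine (h ((Under.map L.hom).obj M) v).trans (Finset.sum_congr rfl fun i _ => ?_)
  exact congrArg (· * _) (A.map_comp_apply L.hom M.hom (c i))

section Product

variable {G H A : C ⥤ Type} {K : C}

def curryFst (β : ∀ L : Under K, (FunctorToTypes.prod G H).obj L.right → A.obj L.right)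
    (L : Under K) (f : G.obj L.right) (M : Under L.right) (w : H.obj M.right) : A.obj M.right :=
  β ((Under.map L.hom).obj M) (G.map M.hom f, w)

variable {β : ∀ L : Under K, (FunctorToTypes.prod G H).obj L.right → A.obj L.right}

theorem IsInvariantOver.curryFst (hβ : IsInvariantOver (FunctorToTypes.prod G H) A K β)
    (L : Under K) (f : G.obj L.right) : IsInvariantOver H A L.right (curryFst β L f) := by
  intro M M' g w
  have h := hβ _ _ ((Under.map L.hom).map g) (G.map M.hom f, w)
  show β ((Under.map L.hom).obj M') (G.map M'.hom f, H.map g.right w) = _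
  rw [← Under.w g, Functor.map_comp_apply]
  exact h

theorem curryFst_mk_id (L : Under K) (f : G.obj L.right) (w : H.obj L.right) :
    curryFst β L f (Under.mk (𝟙 L.right)) w = β L (f, w) := by
  show β (Under.mk (L.hom ≫ 𝟙 _)) (G.map (𝟙 _) f, w) = β L (f, w)
  rw [Category.comp_id, Functor.map_id_apply]
  rfl

theorem curryFst_map {L L' : Under K} (g : L ⟶ L') (f : G.obj L.right) (M : Under L'.right)
    (w : H.obj M.right) :
    curryFst β L' (G.map g.right f) M w = curryFst β L f ((Under.map g.right).obj M) w := by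
  show β (Under.mk (L'.hom ≫ M.hom)) (G.map M.hom (G.map g.right f), w) =
    β (Under.mk (L.hom ≫ g.right ≫ M.hom)) (G.map (g.right ≫ M.hom) f, w)
  rw [Functor.map_comp_apply, ← Under.w g, Category.assoc]

variable [∀ Y : C, CommRing (A.obj Y)] {ι κ : Type} [Fintype ι] [Fintype κ]
  {α : ι → (G ⟶ A)} {δ : κ → ∀ Y : C, H.obj Y → A.obj Y}

theorem IsLinearCombination.curryFst
    (hA : ∀ {Y Z : C} (f : Y ⟶ Z), ∃ φ : A.obj Y →+* A.obj Z, ⇑φ = A.map f)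
    {c : ι × κ → A.obj K}
    (hc : IsLinearCombination (FunctorToTypes.prod G H) A
      (fun p Y v => (α p.1).app Y v.1 * δ p.2 Y v.2) β c)
    (L : Under K) (f : G.obj L.right) :
    IsLinearCombination H A δ (curryFst β L f)
      (fun j => ∑ i, A.map L.hom (c (i, j)) * (α i).app L.right f) := by
  intro M w
  obtain ⟨φ, hφ⟩ := hA M.hom
  refine (hc ((Under.map L.hom).obj M) (G.map M.hom f, w)).trans ?_
  rw [Fintype.sum_prod_type, Finset.sum_comm]
  refine Finset.sum_congr rfl fun j _ => ?_
  rw [← hφ, map_sum, Finset.sum_mul]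
  refine Finset.sum_congr rfl fun i _ => ?_
  rw [map_mul, hφ, ← Functor.map_comp_apply, ← NatTrans.naturality_apply, mul_assoc]
  rfl

theorem isLinearCombination_prod_of_curryFst
    {d : ∀ L : Under K, G.obj L.right → κ → A.obj L.right}
    (hd : ∀ L f, IsLinearCombination H A δ (curryFst β L f) (d L f)) {e : κ → ι → A.obj K}
    (he : ∀ j, IsLinearCombination G A (fun i Y v => (α i).app Y v) (fun L f => d L f j) (e j)) :
    IsLinearCombination (FunctorToTypes.prod G H) A
      (fun (p : ι × κ) Y v => (α p.1).app Y v.1 * δ p.2 Y v.2) β (fun p => e p.2 p.1) := by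
  rintro L ⟨f, w⟩
  have h := hd L f (Under.mk (𝟙 L.right)) w
  rw [curryFst_mk_id] at h
  refine h.trans ?_
  rw [Fintype.sum_prod_type, Finset.sum_comm]
  refine Finset.sum_congr rfl fun j _ => ?_
  show A.map (𝟙 L.right) (d L f j) * δ j L.right w = _
  rw [Functor.map_id_apply]
  refine (congrArg (· * δ j L.right w) (he j L f)).trans ?_
  rw [Finset.sum_mul]
  exact Finset.sum_congr rfl fun i _ => mul_assoc _ _ _

theorem IsStrongBasis.prod
    (hA : ∀ {Y Z : C} (f : Y ⟶ Z), ∃ φ : A.obj Y →+* A.obj Z, ⇑φ = A.map f)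
    (hα : IsStrongBasis G A (fun i Y v => (α i).app Y v)) (hδ : IsStrongBasis H A δ) :
    IsStrongBasis (FunctorToTypes.prod G H) A
      (fun (p : ι × κ) Y v => (α p.1).app Y v.1 * δ p.2 Y v.2) := by
  intro K β hβ
  choose d hd hd_unique using fun L f => hδ L.right (curryFst β L f) (hβ.curryFst L f)
  have hd_map : ∀ (L L' : Under K) (g : L ⟶ L') (f : G.obj L.right),
      d L' (G.map g.right f) = fun j => A.map g.right (d L f j) := by
    intro L L' g f
    refine (hd_unique L' _ _ fun M w => ?_).symm
    rw [curryFst_map]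
    exact (hd L f).restrict (Under.mk g.right) M w
  choose e he he_unique using fun j =>
    hα K (fun L f => d L f j) fun L L' g f => congrFun (hd_map L L' g f) j
  refine ⟨fun p => e p.2 p.1, isLinearCombination_prod_of_curryFst hd he, fun c hc => ?_⟩
  funext ⟨i, j⟩
  refine congrFun (he_unique j (fun i => c (i, j)) fun L f => ?_) i
  exact (congrFun (hd_unique L f _ (hc.curryFst hA L f)) j).symm

end Product

def powFunctorSuccIso (F : C ⥤ Type) (r : ℕ) :
    powFunctor F (r + 1) ≅ FunctorToTypes.prod F (powFunctor F r) :=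
  NatIso.ofComponents (fun Y => (Fin.consEquiv fun _ => F.obj Y).symm.toIso) fun _ => rfl

end

/-- Let `C` be a category of field extensions of `k`, `F` a set-valued
functor, `A` a commutative-ring-valued functor (a `Type`-valued functor whose values are
commutative rings and whose transition maps are ring homomorphisms), and `(α_x)_{x ∈ X}`
a finite family of invariants in `Inv(F, A)` which is a *strong basis*: for every
`K ∈ C`, every invariant over `K` (a natural family on the under-category of `K`) is
uniquely an `A(K)`-linear combination of the `α_x`. For `x̄ = (x₁,…,x_r) ∈ X^r` define
`α_{x̄} ∈ Inv(F^r, A)` by `α_{x̄}(f₁,…,f_r) = ∏ᵢ α_{x_i}(f_i)`. Then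
`(α_{x̄})_{x̄ ∈ X^r}` is a strong basis of `Inv(F^r, A)`. -/
theorem stmt12 {C : Type} [Category C] (F A : C ⥤ Type)
    [∀ Y : C, CommRing (A.obj Y)]
    (hA : ∀ {Y Z : C} (f : Y ⟶ Z), ∃ φ : A.obj Y →+* A.obj Z, ⇑φ = A.map f)
    (X : Type) [Fintype X]
    (α : X → (F ⟶ A))
    (hstrong : ∀ K : C, ∀ β : ∀ L : Under K, F.obj L.right → A.obj L.right,
      (∀ (L L' : Under K) (g : L ⟶ L') (f : F.obj L.right),
        β L' (F.map g.right f) = A.map g.right (β L f)) →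
      ∃! c : X → A.obj K, ∀ (L : Under K) (f : F.obj L.right),
        β L f = ∑ x : X,
          A.map (show K ⟶ L.right from L.hom) (c x) * (α x).app L.right f)
    (r : ℕ) :
    ∀ K : C, ∀ β : ∀ L : Under K, (Fin r → F.obj L.right) → A.obj L.right,
      (∀ (L L' : Under K) (g : L ⟶ L') (v : Fin r → F.obj L.right),
        β L' (fun i => F.map g.right (v i)) = A.map g.right (β L v)) →
      ∃! c : (Fin r → X) → A.obj K, ∀ (L : Under K) (v : Fin r → F.obj L.right),
        β L v = ∑ d : Fin r → X,
          A.map (show K ⟶ L.right from L.hom) (c d)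
            * ∏ i : Fin r, (α (d i)).app L.right (v i) := by
  have hα : IsStrongBasis F A (fun x Y v => (α x).app Y v) := hstrong
  suffices h : IsStrongBasis (powFunctor F r) A
      (fun (d : Fin r → X) Y v => ∏ i, (α (d i)).app Y (v i)) from h
  induction r with
  | zero =>
    have : ∀ Y, Unique ((powFunctor F 0).obj Y) := fun Y => Pi.uniqueOfIsEmpty _
    simpa only [Fin.prod_univ_zero] using isStrongBasis_of_unique (G := powFunctor F 0) (A := A)
  | succ r ih =>
    have h := ((hα.prod hA ih).of_iso (powFunctorSuccIso F r)).reindex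
      (Fin.consEquiv fun _ => X).symm
    convert h using 4 with d Y v
    exact Fin.prod_univ_succ _
end
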